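/- arXiv:math/9807127 — 2 statements merged into one kernel-verified Lean document; each statement's English description precedes it below -/
import Mathlib

section
/- Let Γ be a finite Gorenstein scheme of degree r+s+2 over a field k, let Γ₁ ⊆ Γ be a subscheme and let Γ₂ be the subscheme of Γ residual to Γ₁. Let (V, L) be a linear series on Γ of projective dimension r (i.e. dim_k V = r+1), and let W ⊆ H⁰(K_Γ ⊗ L⁻¹) be its Gale transform. Then the failure of Γ₁ to span ℙ(V) (that is, the codimension of the linear span of the image of Γ₁ in ℙ(V)) is equal to the failure of Γ₂ to impose independent conditions on W (that is, the dimension of the cokernel of the restriction map from W to sections over Γ₂). -/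
/-!
# The Gale transform: the basic principle (Eisenbud–Popescu, Proposition 2.2)

We model a finite (locally) Gorenstein scheme `Γ` over a field `k` by its (finite-dimensional)
affine coordinate ring `A = H⁰(O_Γ)`: a subscheme `Γ₁ ⊆ Γ` corresponds to an ideal `I ⊆ A`
(with `Γ₁ = Spec (A/I)`), and the residual subscheme `Γ₂` corresponds to the annihilator
ideal `(0 : I)`.

A line bundle on the finite scheme `Γ` is an invertible `A`-module `L` (free of rank one,
since `A` is Artinian), and `H⁰(L) = L`.  By Serre duality for the finite Gorenstein scheme
`Γ`, `H⁰(K_Γ) = Hom_k(A, k)` with trace map `τ = (evaluation at 1)`, and hence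
`H⁰(K_Γ ⊗ L⁻¹) = Hom_A(L, Hom_k(A,k)) = Hom_k(L, k) = Dual k L`, in such a way that the
perfect pairing `H⁰(L) ⊗ H⁰(K_Γ ⊗ L⁻¹) → H⁰(K_Γ) → k` of the Gale-transform construction
becomes the evaluation pairing between `L` and `Dual k L`.  Accordingly, the Gale transform
of a linear series `V ⊆ H⁰(L)` is `V^⊥ = V.dualAnnihilator ⊆ Dual k L`.

The statement: the failure of `Γ₁` to span `ℙ(V)` (the dimension of the kernel of
`V → H⁰(L|_{Γ₁}) = L/IL`, i.e. of `V ⊓ I·L`) equals the failure of `Γ₂` to impose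
independent conditions on `W = V^⊥` (the dimension of the cokernel of the restriction map
`W → H⁰((K_Γ ⊗ L⁻¹)|_{Γ₂})`).
-/

open Module Submodule

/-- A finite scheme `Γ = Spec A` over a field `k` (with `A` a finite-dimensional commutative
`k`-algebra) is *(locally) Gorenstein* iff the `k`-linear dual of `A` is a cyclic `A`-module
for the action `(a • φ) x = φ (a * x)`. -/
def IsGorensteinAlg (k A : Type) [Field k] [CommRing A] [Algebra k A] : Prop :=
  ∃ φ : Module.Dual k A, ∀ ψ : Module.Dual k A, ∃ a : A, ∀ x : A, ψ x = φ (a * x)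

section LineBundle

variable (k : Type) [Field k] (A : Type) [CommRing A] [Algebra k A]
variable (L : Type) [AddCommGroup L] [Module k L] [Module A L]
  [IsScalarTower k A L] [SMulCommClass k A L]

/-- Multiplication by `a : A` on the `A`-module `L`, as a `k`-linear endomorphism. -/
def smulEnd (a : A) : L →ₗ[k] L where
  toFun x := a • x
  map_add' := smul_add a
  map_smul' c x := (smul_comm c a x).symm

/-- The space of sections of (the sheaf associated to) the `A`-module `L` vanishing on the
closed subscheme of `Γ = Spec A` defined by the ideal `I`; i.e. the kernel of the restriction
map `H⁰(L) → H⁰(L|_{Spec (A/I)}) = L/I·L`. -/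
def idealSmul (I : Ideal A) : Submodule k L :=
  (I • (⊤ : Submodule A L)).restrictScalars k

/-- With `H⁰(K_Γ ⊗ L⁻¹)` identified with `Dual k L` (see the module docstring), the
subspace `I • H⁰(K_Γ ⊗ L⁻¹)` of sections vanishing on the subscheme defined by `I`; here
`A` acts on `Dual k L` by `(a • ψ) x = ψ (a • x)`. -/
def idealSmulDual (I : Ideal A) : Submodule k (Module.Dual k L) :=
  Submodule.span k {ψ | ∃ a ∈ I, ∃ φ : Module.Dual k L, ψ = φ ∘ₗ smulEnd k A L a}

end LineBundle

/-!
A Gorenstein algebra `A` carries a functional `φ` for which `(a, x) ↦ φ (a * x)` is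
a perfect pairing. Transported to `L` along a generator, this identifies the sections of
`K_Γ ⊗ L⁻¹` vanishing on the residual scheme `Γ₂`, i.e. `(0 : I) · L^*`, with the annihilator
`(I · L)^⊥`. What remains is linear algebra: for subspaces `M`, `V` of `L`,
`(L^* / M^⊥) / (image of V^⊥) ≅ L^* / (M^⊥ + V^⊥) = L^* / (M ⊓ V)^⊥ ≅ (M ⊓ V)^*`.
-/

theorem Subspace.finrank_quotient_map_dualAnnihilator {K V : Type*} [Field K] [AddCommGroup V]
    [Module K V] (M W : Subspace K V) :
    finrank K ((Dual K V ⧸ M.dualAnnihilator) ⧸ W.dualAnnihilator.map M.dualAnnihilator.mkQ) =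
      finrank K ↥(W ⊓ M) := by
  rw [(quotientQuotientEquivQuotientSup _ _).finrank_eq, ← Subspace.dualAnnihilator_inf_eq,
    inf_comm, (Subspace.quotAnnihilatorEquiv _).finrank_eq, Subspace.dual_finrank_eq]

theorem IsGorensteinAlg.exists_perfect_trace {k A : Type} [Field k] [CommRing A] [Algebra k A]
    [FiniteDimensional k A] (hA : IsGorensteinAlg k A) :
    ∃ φ : Dual k A, (∀ ψ : Dual k A, ∃ a : A, ∀ x : A, ψ x = φ (a * x)) ∧
      ∀ a : A, (∀ x : A, φ (a * x) = 0) → a = 0 := by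
  obtain ⟨φ, hφ⟩ := hA
  let T : A →ₗ[k] Dual k A := (LinearMap.mul k A).compr₂ φ
  have hT_surj : Function.Surjective T := fun ψ ↦
    (hφ ψ).imp fun a ha ↦ (LinearMap.ext ha).symm
  have hT_inj : Function.Injective T :=
    (LinearMap.injective_iff_surjective_of_finrank_eq_finrank
      Subspace.dual_finrank_eq.symm).2 hT_surj
  exact ⟨φ, hφ, fun a ha ↦ (injective_iff_map_eq_zero T).1 hT_inj a (LinearMap.ext ha)⟩

section ResidualDuality

variable {k A : Type} [Field k] [CommRing A] [Algebra k A]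
  {L : Type} [AddCommGroup L] [Module k L] [Module A L] [IsScalarTower k A L]

theorem smul_mem_idealSmul {I : Ideal A} {a : A} (ha : a ∈ I) (x : L) :
    a • x ∈ idealSmul k A L I :=
  (restrictScalars_mem k _ _).2 (smul_mem_smul ha mem_top)

variable [SMulCommClass k A L]

theorem idealSmulDual_annihilator_le (I : Ideal A) :
    idealSmulDual k A L I.annihilator ≤ (idealSmul k A L I).dualAnnihilator := by
  refine span_le.2 ?_
  rintro _ ⟨a, ha, φ, rfl⟩
  refine (mem_dualAnnihilator _).2 fun x hx ↦ ?_
  have hax : a • x ∈ (I.annihilator • I) • (⊤ : Submodule A L) := by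
    rw [Submodule.smul_assoc]
    exact smul_mem_smul ha hx
  rw [annihilator_smul, bot_smul, mem_bot] at hax
  change φ (a • x) = 0
  rw [hax, map_zero]

theorem dualAnnihilator_idealSmul_le [FiniteDimensional k A] (hA : IsGorensteinAlg k A) (e : L)
    (he : Function.Bijective fun a : A ↦ a • e) (I : Ideal A) :
    (idealSmul k A L I).dualAnnihilator ≤ idealSmulDual k A L I.annihilator := by
  obtain ⟨φ, hφ, hφ_nondeg⟩ := hA.exists_perfect_trace
  let θ : A ≃ₗ[k] L :=
    (LinearEquiv.ofBijective (LinearMap.toSpanSingleton A L e) he).restrictScalars k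
  have hθ : ∀ c : A, θ c = c • e := fun _ ↦ rfl
  intro ψ hψ
  obtain ⟨a, ha⟩ := hφ (ψ ∘ₗ θ.toLinearMap)
  have ha_ann : a ∈ I.annihilator := by
    refine mem_annihilator.2 fun c hc ↦ hφ_nondeg _ fun d ↦ ?_
    rw [smul_eq_mul, mul_assoc, ← ha, LinearMap.comp_apply, LinearEquiv.coe_coe, hθ]
    exact (mem_dualAnnihilator ψ).1 hψ _ (smul_mem_idealSmul (I.mul_mem_right d hc) e)
  refine subset_span ⟨a, ha_ann, φ ∘ₗ θ.symm.toLinearMap, LinearMap.ext fun x ↦ ?_⟩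
  obtain ⟨b, rfl⟩ := he.2 x
  change ψ (b • e) = φ (θ.symm (a • b • e))
  rw [← mul_smul, ← hθ, ← hθ, θ.symm_apply_apply]
  exact ha b

theorem idealSmulDual_annihilator_eq [FiniteDimensional k A] (hA : IsGorensteinAlg k A) (e : L)
    (he : Function.Bijective fun a : A ↦ a • e) (I : Ideal A) :
    idealSmulDual k A L I.annihilator = (idealSmul k A L I).dualAnnihilator :=
  (idealSmulDual_annihilator_le I).antisymm (dualAnnihilator_idealSmul_le hA e he I)

end ResidualDuality

theorem gale_basic_principle_general
    (k : Type) [Field k] (A : Type) [CommRing A] [Algebra k A] [FiniteDimensional k A]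
    (hGor : IsGorensteinAlg k A)
    -- `L` is a line bundle on `Γ = Spec A`: an invertible, i.e. free rank-one, `A`-module
    (L : Type) [AddCommGroup L] [Module k L] [Module A L]
    [IsScalarTower k A L] [SMulCommClass k A L]
    (e : L) (he : Function.Bijective fun a : A => a • e)
    -- the linear series `(V, L)` of projective dimension `r`
    (V : Submodule k L) :
    ∀ I : Ideal A,
      -- the failure of `Γ₁ = Spec (A/I)` to span `ℙ(V)` ...
      Module.finrank k ↥(V ⊓ idealSmul k A L I)
      -- ... equals the failure of the residual subscheme `Γ₂ = Spec (A/(0 : I))` to impose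
      -- independent conditions on the Gale transform `W = V^⊥`:
        = Module.finrank k
            ((Module.Dual k L ⧸ idealSmulDual k A L I.annihilator) ⧸
              Submodule.map (idealSmulDual k A L I.annihilator).mkQ V.dualAnnihilator) := by
  intro I
  rw [idealSmulDual_annihilator_eq hGor e he I, Subspace.finrank_quotient_map_dualAnnihilator]

/-- **The basic principle of the Gale transform** (Proposition 2.2 of Eisenbud–Popescu,
"The projective geometry of the Gale transform").

Let `Γ = Spec A` be a finite Gorenstein scheme of degree `r + s + 2` over a field `k`, let
`Γ₁ ⊆ Γ` be the subscheme defined by an ideal `I`, and let `Γ₂` be the residual subscheme,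
defined by the annihilator ideal of `I`.  Let `(V, L)` be a linear series on `Γ` of projective
dimension `r` (so `dim_k V = r + 1`), and let `W = V^⊥ ⊆ H⁰(K_Γ ⊗ L⁻¹) = Dual k L` be its
Gale transform.  Then the failure of `Γ₁` to span `ℙ(V)`, namely `dim_k (V ⊓ I·L)`, equals the
failure of `Γ₂` to impose independent conditions on `W`, namely the dimension of the cokernel
of the restriction map from `W` to `H⁰((K_Γ ⊗ L⁻¹)|_{Γ₂})`. -/
theorem gale_basic_principle
    (k : Type) [Field k] (A : Type) [CommRing A] [Algebra k A] [FiniteDimensional k A]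
    (hGor : IsGorensteinAlg k A)
    -- `L` is a line bundle on `Γ = Spec A`: an invertible, i.e. free rank-one, `A`-module
    (L : Type) [AddCommGroup L] [Module k L] [Module A L]
    [IsScalarTower k A L] [SMulCommClass k A L]
    (e : L) (he : Function.Bijective fun a : A => a • e)
    (r s : ℕ) (hdeg : Module.finrank k A = r + s + 2)
    -- the linear series `(V, L)` of projective dimension `r`
    (V : Submodule k L) (hV : Module.finrank k ↥V = r + 1) :
    ∀ I : Ideal A,
      -- the failure of `Γ₁ = Spec (A/I)` to span `ℙ(V)` ...
      Module.finrank k ↥(V ⊓ idealSmul k A L I)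
      -- ... equals the failure of the residual subscheme `Γ₂ = Spec (A/(0 : I))` to impose
      -- independent conditions on the Gale transform `W = V^⊥`:
        = Module.finrank k
            ((Module.Dual k L ⧸ idealSmulDual k A L I.annihilator) ⧸
              Submodule.map (idealSmulDual k A L I.annihilator).mkQ V.dualAnnihilator) :=
  gale_basic_principle_general k A hGor L e he V
end

section
/- Let Γ ⊂ ℙ^r_k be a nondegenerate set of 2r+2 distinct points. Then Γ is self-associated if and only if Γ can be decomposed into a disjoint union Γ = Γ₁ ∪ Γ₂, where Γ₁ and Γ₂ correspond to orthogonal bases for the same nonsingular symmetric bilinear form on the underlying vector space V (with dim_k V = r+1). -/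
/-!
# Self-associated point sets and pairs of orthogonal bases
(Eisenbud–Popescu, Theorem 8.1; after Babbage and Castelnuovo)

A set `Γ` of `2r+2` distinct labeled points in `ℙʳ_k = ℙ(V)`, `V = k^{r+1}`, is given by a
family `v : Fin (2r+2) → V` of nonzero, pairwise non-proportional representative vectors; it
is nondegenerate iff the `v i` span `V`.

Following the classical matrix definition (Coble): if `G` is the `(2r+2) × (r+1)` matrix of
homogeneous coordinates of `Γ`, a set `Γ'` with coordinate matrix `G'` is the *Gale
transform* of `Γ` iff `Gᵀ · D · G' = 0` for some nonsingular diagonal matrix `D`; and `Γ` is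
*self-associated* iff its Gale transform can be taken projectively equivalent to `Γ` itself,
i.e. `G' = G · Mᵀ` for some invertible matrix `M` (the scaling freedom in the choice of
representatives being absorbed into `D`).

The theorem: `Γ` is self-associated iff it can be split into two disjoint sets of `r+1`
points whose representative vectors form two orthogonal bases — bases consisting of pairwise
orthogonal, non-isotropic vectors — for one and the same nonsingular symmetric bilinear form
on `V`.
-/

open Module Submodule

open Matrix

set_option maxHeartbeats 1000000

namespace EPaux

variable {k : Type} [Field k] {n : ℕ}

lemma gram_entry (Q G : Matrix (Fin n) (Fin n) k) (a b : Fin n) :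
    (G * Q * Gᵀ) a b = G a ⬝ᵥ Q *ᵥ G b := by
  simp only [Matrix.mul_apply, Matrix.transpose_apply, dotProduct, Matrix.mulVec,
    Finset.sum_mul, Finset.mul_sum]
  rw [Finset.sum_comm]
  exact Finset.sum_congr rfl fun x _ => Finset.sum_congr rfl fun y _ => by ring

lemma tgram_entry (c : Fin n → k) (G : Matrix (Fin n) (Fin n) k) (a b : Fin n) :
    (Gᵀ * Matrix.diagonal c * G) a b = ∑ x, c x * G x a * G x b := by
  rw [Matrix.mul_assoc]
  simp only [Matrix.mul_apply, Matrix.transpose_apply, Matrix.diagonal_apply, ite_mul,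
    zero_mul, Finset.sum_ite_eq, Finset.mem_univ, if_true]
  exact Finset.sum_congr rfl fun x _ => by ring

lemma inv_gram {G : Matrix (Fin n) (Fin n) k} (D : Matrix (Fin n) (Fin n) k)
    (hG : IsUnit G.det) : G * (Gᵀ * D * G)⁻¹ * Gᵀ = D⁻¹ := by
  have hGT : IsUnit Gᵀ.det := by rwa [Matrix.det_transpose]
  rw [Matrix.mul_inv_rev, Matrix.mul_inv_rev, ← Matrix.mul_assoc, ← Matrix.mul_assoc,
    Matrix.mul_nonsing_inv _ hG, Matrix.one_mul, Matrix.mul_assoc,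
    Matrix.nonsing_inv_mul _ hGT, Matrix.mul_one]

lemma inv_gram' {G : Matrix (Fin n) (Fin n) k} (Q : Matrix (Fin n) (Fin n) k)
    (hG : IsUnit G.det) : Gᵀ * (G * Q * Gᵀ)⁻¹ * G = Q⁻¹ := by
  have := inv_gram (G := Gᵀ) Q (by rwa [Matrix.det_transpose])
  rwa [Matrix.transpose_transpose] at this

lemma diag_inv (c : Fin n → k) (hc : ∀ a, c a ≠ 0) :
    (Matrix.diagonal c)⁻¹ = Matrix.diagonal (fun a => (c a)⁻¹) := by
  apply Matrix.inv_eq_right_inv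
  rw [Matrix.diagonal_mul_diagonal,
    show (fun a => c a * (c a)⁻¹) = fun _ => (1 : k) from funext fun a => mul_inv_cancel₀ (hc a),
    Matrix.diagonal_one]

end EPaux

/-- **Eisenbud–Popescu, Theorem 8.1.**  Let `Γ` be a nondegenerate set of `2r+2` distinct
points in `ℙʳ_k`, given by representative vectors `v i`.  Then `Γ` is self-associated if and
only if it decomposes as a disjoint union `Γ = Γ₁ ∪ Γ₂` where `Γ₁` and `Γ₂` correspond to
orthogonal bases for the same nonsingular symmetric bilinear form. -/
theorem self_associated_iff_two_orthogonal_bases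
    (k : Type) [Field k] (r : ℕ)
    (v : Fin (2 * r + 2) → (Fin (r + 1) → k))
    -- the `v i` represent points of `ℙʳ`:
    (hv0 : ∀ i, v i ≠ 0)
    -- the points are distinct:
    (hdist : ∀ i j, i ≠ j → ¬ ∃ c : k, v j = c • v i)
    -- the set is nondegenerate:
    (hnd : Submodule.span k (Set.range v) = ⊤) :
    -- `Γ` is self-associated: some projective transform of `Γ` is a Gale transform of `Γ` ...
    (∃ (d : Fin (2 * r + 2) → k) (M : Matrix (Fin (r + 1)) (Fin (r + 1)) k),
        (∀ i, d i ≠ 0) ∧ IsUnit M.det ∧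
        ∀ a b : Fin (r + 1), (∑ i, d i * v i a * M.mulVec (v i) b) = 0) ↔
    -- ... iff `Γ` splits into two orthogonal bases for one nonsingular symmetric form:
    (∃ B : LinearMap.BilinForm k (Fin (r + 1) → k),
        B.IsSymm ∧ B.Nondegenerate ∧
        ∃ S : Finset (Fin (2 * r + 2)), S.card = r + 1 ∧
          -- `Γ₁ = {v i | i ∈ S}` is an orthogonal basis for `B`:
          (LinearIndependent k (fun i : (S : Set (Fin (2 * r + 2))) => v i) ∧
            (∀ i ∈ S, ∀ j ∈ S, i ≠ j → B (v i) (v j) = 0) ∧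
            (∀ i ∈ S, B (v i) (v i) ≠ 0)) ∧
          -- `Γ₂ = {v i | i ∉ S}` is an orthogonal basis for `B`:
          (LinearIndependent k (fun i : ((↑Sᶜ : Set (Fin (2 * r + 2)))) => v i) ∧
            (∀ i ∈ Sᶜ, ∀ j ∈ Sᶜ, i ≠ j → B (v i) (v j) = 0) ∧
            (∀ i ∈ Sᶜ, B (v i) (v i) ≠ 0))) := by
  classical
  constructor
  · rintro ⟨d, M, hd, hM, hGale⟩
    -- Step 1: eliminate `M`: the matrix `A = Gᵀ D G` vanishes.
    set A : Matrix (Fin (r+1)) (Fin (r+1)) k :=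
      Matrix.of (fun a c => ∑ i, d i * v i a * v i c) with hAdef
    have hAM : A * Mᵀ = 0 := by
      ext a b
      have h := hGale a b
      simp only [Matrix.mulVec, dotProduct, Finset.mul_sum] at h
      rw [Finset.sum_comm] at h
      simp only [Matrix.mul_apply, Matrix.zero_apply, Matrix.of_apply, Matrix.transpose_apply,
        Finset.sum_mul, hAdef]
      rw [← h]
      exact Finset.sum_congr rfl fun c _ => Finset.sum_congr rfl fun i _ => by ring
    have hA0 : A = 0 := by
      have hMT : IsUnit (Mᵀ).det := by rwa [Matrix.det_transpose]
      calc A = A * (Mᵀ * (Mᵀ)⁻¹) := by rw [Matrix.mul_nonsing_inv _ hMT, Matrix.mul_one]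
        _ = (A * Mᵀ) * (Mᵀ)⁻¹ := by rw [Matrix.mul_assoc]
        _ = 0 := by rw [hAM, Matrix.zero_mul]
    have hA : ∀ a b, (∑ i, d i * v i a * v i b) = 0 := by
      intro a b
      have h := congrFun (congrFun hA0 a) b
      simpa [hAdef] using h
    -- Step 2: `v` is injective.
    have hvinj : Function.Injective v := by
      intro i j hij
      by_contra hne
      exact hdist i j hne ⟨1, by rw [one_smul, hij]⟩
    -- Step 3: a subset `S` of size `r+1` indexing a basis.
    obtain ⟨bset, hbsub, hbspan, hbli⟩ := exists_linearIndependent k (Set.range v)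
    haveI : Fintype ↥bset := ((Set.finite_range v).subset hbsub).fintype
    let bas : Basis ↥bset k (Fin (r+1) → k) :=
      Basis.mk hbli (by rw [Subtype.range_coe, hbspan, hnd])
    have hbcard : Fintype.card ↥bset = r + 1 := by
      have h1 := Module.finrank_eq_card_basis bas
      rw [Module.finrank_fin_fun] at h1
      omega
    set S : Finset (Fin (2*r+2)) := Finset.univ.filter (fun i => v i ∈ bset) with hSdef
    have hmemS : ∀ i, i ∈ S ↔ v i ∈ bset := by intro i; simp [hSdef]
    let φ : ↥S ≃ ↥bset := Equiv.ofBijective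
      (fun i => ⟨v ↑i, (hmemS ↑i).mp i.2⟩)
      ⟨fun i j h => Subtype.ext (hvinj (congrArg Subtype.val h)),
       fun x => by
         obtain ⟨i, hi⟩ := hbsub x.2
         exact ⟨⟨i, (hmemS i).mpr (by rw [hi]; exact x.2)⟩, Subtype.ext hi⟩⟩
    have hScard : S.card = r + 1 := by
      rw [← Fintype.card_coe, Fintype.card_congr φ, hbcard]
    have hliS : LinearIndependent k (fun i : ↥S => v ↑i) := hbli.comp φ φ.injective
    have hSccard : Sᶜ.card = r + 1 := by
      rw [Finset.card_compl, hScard, Fintype.card_fin]; omega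
    -- Step 4: matrices
    let εS : ↥S ≃ Fin (r+1) :=
      Fintype.equivFinOfCardEq (by rw [Fintype.card_coe]; exact hScard)
    let εC : ↥(Sᶜ) ≃ Fin (r+1) :=
      Fintype.equivFinOfCardEq (by rw [Fintype.card_coe]; exact hSccard)
    set G₁ : Matrix (Fin (r+1)) (Fin (r+1)) k :=
      Matrix.of (fun a j => v ↑(εS.symm a) j) with hG1def
    set G₂ : Matrix (Fin (r+1)) (Fin (r+1)) k :=
      Matrix.of (fun a j => v ↑(εC.symm a) j) with hG2def
    set c₁ : Fin (r+1) → k := fun a => d ↑(εS.symm a) with hc1def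
    set c₂ : Fin (r+1) → k := fun a => d ↑(εC.symm a) with hc2def
    have hsplit : ∀ f : Fin (2*r+2) → k,
        (∑ i, f i) = (∑ a, f ↑(εS.symm a)) + ∑ a, f ↑(εC.symm a) := by
      intro f
      rw [← Finset.sum_add_sum_compl S f]
      congr 1
      · rw [← Finset.sum_coe_sort S f]
        exact (Equiv.sum_comp εS.symm (fun i : ↥S => f ↑i)).symm
      · rw [← Finset.sum_coe_sort Sᶜ f]
        exact (Equiv.sum_comp εC.symm (fun i : ↥(Sᶜ) => f ↑i)).symm
    have hsum0 : G₁ᵀ * Matrix.diagonal c₁ * G₁ + G₂ᵀ * Matrix.diagonal c₂ * G₂ = 0 := by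
      ext a b
      simp only [Matrix.add_apply, Matrix.zero_apply]
      rw [EPaux.tgram_entry, EPaux.tgram_entry]
      have h := hsplit (fun i => d i * v i a * v i b)
      rw [hA a b] at h
      exact h.symm
    have hG1 : IsUnit G₁.det := by
      have h2 : LinearIndependent k (fun a : Fin (r+1) => G₁ a) :=
        hliS.comp εS.symm εS.symm.injective
      exact (Matrix.isUnit_iff_isUnit_det _).mp (Matrix.linearIndependent_rows_iff_isUnit.mp h2)
    have hD1 : IsUnit (Matrix.diagonal c₁).det := by
      rw [Matrix.det_diagonal]
      exact isUnit_iff_ne_zero.mpr (Finset.prod_ne_zero_iff.mpr fun a _ => hd _)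
    set P := G₁ᵀ * Matrix.diagonal c₁ * G₁ with hPdef
    have hPdet : IsUnit P.det := by
      rw [hPdef, Matrix.det_mul, Matrix.det_mul, Matrix.det_transpose]
      exact (hG1.mul hD1).mul hG1
    have hPneg : G₂ᵀ * Matrix.diagonal c₂ * G₂ = -P := eq_neg_of_add_eq_zero_right hsum0
    have hG2 : IsUnit G₂.det := by
      have h1 : IsUnit (G₂ᵀ * Matrix.diagonal c₂ * G₂).det := by
        rw [hPneg, Matrix.det_neg]
        exact ((isUnit_one.neg).pow _).mul hPdet
      rw [Matrix.det_mul, Matrix.det_mul, Matrix.det_transpose] at h1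
      exact isUnit_of_mul_isUnit_right h1
    set Q := P⁻¹ with hQdef
    have hQdet : IsUnit Q.det := Matrix.isUnit_nonsing_inv_det _ hPdet
    have hPsymm : Pᵀ = P := by
      rw [hPdef]
      simp [Matrix.transpose_mul, Matrix.diagonal_transpose, Matrix.mul_assoc]
    have hQsymm : Qᵀ = Q := by rw [hQdef, Matrix.transpose_nonsing_inv, hPsymm]
    have key1 : G₁ * Q * G₁ᵀ = Matrix.diagonal (fun a => (c₁ a)⁻¹) := by
      rw [hQdef, hPdef, EPaux.inv_gram _ hG1, EPaux.diag_inv _ (fun a => hd _)]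
    have hninv : (-P)⁻¹ = -Q := by
      apply Matrix.inv_eq_right_inv
      rw [neg_mul_neg, hQdef, Matrix.mul_nonsing_inv _ hPdet]
    have key2 : G₂ * Q * G₂ᵀ = -Matrix.diagonal (fun a => (c₂ a)⁻¹) := by
      have h4 := EPaux.inv_gram (G := G₂) (Matrix.diagonal c₂) hG2
      rw [hPneg, hninv, EPaux.diag_inv _ (fun a => hd _)] at h4
      have h5 : -(G₂ * Q * G₂ᵀ) = Matrix.diagonal (fun a => (c₂ a)⁻¹) := by
        rw [← h4, Matrix.mul_neg, Matrix.neg_mul]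
      exact neg_eq_iff_eq_neg.mp h5
    -- Step 5: the bilinear form
    refine ⟨Matrix.toLinearMap₂' k Q, ?_, ?_, S, hScard, ⟨?_, ?_, ?_⟩, ⟨?_, ?_, ?_⟩⟩
    · -- symmetric
      refine ⟨fun x y => ?_⟩
      simp only [Matrix.toLinearMap₂'_apply', RingHom.id_apply]
      rw [Matrix.dotProduct_mulVec]
      conv_lhs => rw [← hQsymm]
      rw [Matrix.vecMul_transpose, dotProduct_comm]
    · -- nondegenerate
      exact (Matrix.nondegenerate_of_det_ne_zero hQdet.ne_zero).toLinearMap₂'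
    · exact hliS
    · intro i hi j hj hij
      have hvi : v i = G₁ (εS ⟨i, hi⟩) := by
        funext jj
        show v i jj = v ↑(εS.symm (εS ⟨i, hi⟩)) jj
        rw [Equiv.symm_apply_apply]
      have hvj : v j = G₁ (εS ⟨j, hj⟩) := by
        funext jj
        show v j jj = v ↑(εS.symm (εS ⟨j, hj⟩)) jj
        rw [Equiv.symm_apply_apply]
      rw [hvi, hvj, Matrix.toLinearMap₂'_apply', ← EPaux.gram_entry, key1,
        Matrix.diagonal_apply_ne]
      exact fun hcon => hij (congrArg Subtype.val (εS.injective hcon))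
    · intro i hi
      have hvi : v i = G₁ (εS ⟨i, hi⟩) := by
        funext jj
        show v i jj = v ↑(εS.symm (εS ⟨i, hi⟩)) jj
        rw [Equiv.symm_apply_apply]
      rw [hvi, Matrix.toLinearMap₂'_apply', ← EPaux.gram_entry, key1,
        Matrix.diagonal_apply_eq]
      exact inv_ne_zero (hd _)
    · have h6 : LinearIndependent k (fun a : Fin (r+1) => G₂ a) :=
        Matrix.linearIndependent_rows_iff_isUnit.mpr
          ((Matrix.isUnit_iff_isUnit_det _).mpr hG2)
      exact (linearIndependent_equiv εC.symm).mp h6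
    · intro i hi j hj hij
      have hvi : v i = G₂ (εC ⟨i, hi⟩) := by
        funext jj
        show v i jj = v ↑(εC.symm (εC ⟨i, hi⟩)) jj
        rw [Equiv.symm_apply_apply]
      have hvj : v j = G₂ (εC ⟨j, hj⟩) := by
        funext jj
        show v j jj = v ↑(εC.symm (εC ⟨j, hj⟩)) jj
        rw [Equiv.symm_apply_apply]
      rw [hvi, hvj, Matrix.toLinearMap₂'_apply', ← EPaux.gram_entry, key2,
        Matrix.neg_apply, Matrix.diagonal_apply_ne, neg_zero]
      exact fun hcon => hij (congrArg Subtype.val (εC.injective hcon))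
    · intro i hi
      have hvi : v i = G₂ (εC ⟨i, hi⟩) := by
        funext jj
        show v i jj = v ↑(εC.symm (εC ⟨i, hi⟩)) jj
        rw [Equiv.symm_apply_apply]
      rw [hvi, Matrix.toLinearMap₂'_apply', ← EPaux.gram_entry, key2,
        Matrix.neg_apply, Matrix.diagonal_apply_eq]
      exact neg_ne_zero.mpr (inv_ne_zero (hd _))
  · rintro ⟨B, hBsymm, hBnd, S, hScard, ⟨hli1, horth1, hdiag1⟩, ⟨hli2, horth2, hdiag2⟩⟩
    set Q := LinearMap.toMatrix₂' k B with hQdef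
    have hBQ : ∀ x y, B x y = x ⬝ᵥ Q *ᵥ y := by
      intro x y
      conv_lhs => rw [← Matrix.toLinearMap₂'_toMatrix' (R := k) B]
      rw [Matrix.toLinearMap₂'_apply']
    have hSccard : Sᶜ.card = r + 1 := by
      rw [Finset.card_compl, hScard, Fintype.card_fin]; omega
    let εS : ↥S ≃ Fin (r+1) :=
      Fintype.equivFinOfCardEq (by rw [Fintype.card_coe]; exact hScard)
    let εC : ↥(Sᶜ) ≃ Fin (r+1) :=
      Fintype.equivFinOfCardEq (by rw [Fintype.card_coe]; exact hSccard)
    set G₁ : Matrix (Fin (r+1)) (Fin (r+1)) k :=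
      Matrix.of (fun a j => v ↑(εS.symm a) j) with hG1def
    set G₂ : Matrix (Fin (r+1)) (Fin (r+1)) k :=
      Matrix.of (fun a j => v ↑(εC.symm a) j) with hG2def
    have hsplit : ∀ f : Fin (2*r+2) → k,
        (∑ i, f i) = (∑ a, f ↑(εS.symm a)) + ∑ a, f ↑(εC.symm a) := by
      intro f
      rw [← Finset.sum_add_sum_compl S f]
      congr 1
      · rw [← Finset.sum_coe_sort S f]
        exact (Equiv.sum_comp εS.symm (fun i : ↥S => f ↑i)).symm
      · rw [← Finset.sum_coe_sort Sᶜ f]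
        exact (Equiv.sum_comp εC.symm (fun i : ↥(Sᶜ) => f ↑i)).symm
    have hG1 : IsUnit G₁.det := by
      have h2 : LinearIndependent k (fun a : Fin (r+1) => G₁ a) :=
        hli1.comp εS.symm εS.symm.injective
      exact (Matrix.isUnit_iff_isUnit_det _).mp (Matrix.linearIndependent_rows_iff_isUnit.mp h2)
    have hG2 : IsUnit G₂.det := by
      have h2 : LinearIndependent k (fun a : Fin (r+1) => G₂ a) :=
        hli2.comp εC.symm εC.symm.injective
      exact (Matrix.isUnit_iff_isUnit_det _).mp (Matrix.linearIndependent_rows_iff_isUnit.mp h2)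
    have hQnd : Q.Nondegenerate := by
      exact LinearMap.nondegenerate_toMatrix₂'_iff.mpr hBnd
    have hGram1 : G₁ * Q * G₁ᵀ =
        Matrix.diagonal (fun a => B (v ↑(εS.symm a)) (v ↑(εS.symm a))) := by
      ext a b
      rw [EPaux.gram_entry, ← hBQ]
      by_cases hab : a = b
      · subst hab
        rw [Matrix.diagonal_apply_eq]
        rfl
      · rw [Matrix.diagonal_apply_ne _ hab]
        exact horth1 _ (εS.symm a).2 _ (εS.symm b).2
          (fun h => hab (εS.symm.injective (Subtype.ext h)))
    have hGram2 : G₂ * Q * G₂ᵀ =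
        Matrix.diagonal (fun a => B (v ↑(εC.symm a)) (v ↑(εC.symm a))) := by
      ext a b
      rw [EPaux.gram_entry, ← hBQ]
      by_cases hab : a = b
      · subst hab
        rw [Matrix.diagonal_apply_eq]
        rfl
      · rw [Matrix.diagonal_apply_ne _ hab]
        exact horth2 _ (εC.symm a).2 _ (εC.symm b).2
          (fun h => hab (εC.symm.injective (Subtype.ext h)))
    have hInv1 : Q⁻¹ =
        G₁ᵀ * Matrix.diagonal (fun a => (B (v ↑(εS.symm a)) (v ↑(εS.symm a)))⁻¹) * G₁ := by
      have h := EPaux.inv_gram' (G := G₁) Q hG1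
      rw [hGram1, EPaux.diag_inv _ (fun a => hdiag1 _ (εS.symm a).2)] at h
      exact h.symm
    have hInv2 : Q⁻¹ =
        G₂ᵀ * Matrix.diagonal (fun a => (B (v ↑(εC.symm a)) (v ↑(εC.symm a)))⁻¹) * G₂ := by
      have h := EPaux.inv_gram' (G := G₂) Q hG2
      rw [hGram2, EPaux.diag_inv _ (fun a => hdiag2 _ (εC.symm a).2)] at h
      exact h.symm
    refine ⟨fun i => if i ∈ S then (B (v i) (v i))⁻¹ else -((B (v i) (v i))⁻¹), 1, ?_, ?_, ?_⟩
    · intro i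
      by_cases h : i ∈ S
      · simp only [h, if_true]
        exact inv_ne_zero (hdiag1 i h)
      · simp only [h, if_false]
        exact neg_ne_zero.mpr (inv_ne_zero (hdiag2 i (Finset.mem_compl.mpr h)))
    · simp
    · intro a b
      simp only [Matrix.one_mulVec]
      rw [hsplit (fun i => (if i ∈ S then (B (v i) (v i))⁻¹ else -((B (v i) (v i))⁻¹))
        * v i a * v i b)]
      have t1 : (∑ x, (if (↑(εS.symm x) : Fin (2*r+2)) ∈ S then
            (B (v ↑(εS.symm x)) (v ↑(εS.symm x)))⁻¹
          else -((B (v ↑(εS.symm x)) (v ↑(εS.symm x)))⁻¹)) * v ↑(εS.symm x) a * v ↑(εS.symm x) b)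
          = Q⁻¹ a b := by
        rw [hInv1, EPaux.tgram_entry]
        refine Finset.sum_congr rfl fun x _ => ?_
        rw [if_pos (εS.symm x).2]
        rfl
      have t2 : (∑ x, (if (↑(εC.symm x) : Fin (2*r+2)) ∈ S then
            (B (v ↑(εC.symm x)) (v ↑(εC.symm x)))⁻¹
          else -((B (v ↑(εC.symm x)) (v ↑(εC.symm x)))⁻¹)) * v ↑(εC.symm x) a * v ↑(εC.symm x) b)
          = -(Q⁻¹ a b) := by
        rw [hInv2, EPaux.tgram_entry, ← Finset.sum_neg_distrib]
        refine Finset.sum_congr rfl fun x _ => ?_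
        rw [if_neg (Finset.mem_compl.mp (εC.symm x).2)]
        show -(B (v ↑(εC.symm x)) (v ↑(εC.symm x)))⁻¹ * v ↑(εC.symm x) a * v ↑(εC.symm x) b
          = -((B (v ↑(εC.symm x)) (v ↑(εC.symm x)))⁻¹ * G₂ x a * G₂ x b)
        rw [hG2def]
        ring_nf
        rfl
      rw [t1, t2, add_neg_cancel]
end
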